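/- Let L₁, L₂, L₃ be complete lattices and f monotone on L₁ × L₂ × L₃ with components f₁, f₂, f₃. Define a₁ = μx. f₁(x, μy. f₂(x,y, μz. f₃(x,y,z)), μz. f₃(x, μy. f₂(x,y,z), z)), a₂ = μy. f₂(a₁, y, μz. f₃(a₁,y,z)), a₃ = μz. f₃(a₁, a₂, z). Then (a₁, a₂, a₃) is a fixed point of f. -/
import Mathlib


/-- Least fixed point of `g` (Knaster-Tarski for monotone `g`). -/
def lfp {α : Type*} [CompleteLattice α] (g : α → α) : α := sInf {x | g x ≤ x}

theorem lfp_le' {α : Type*} [CompleteLattice α] {g : α → α} {x : α} (h : g x ≤ x) :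
    lfp g ≤ x := sInf_le h

theorem lfp_fixed {α : Type*} [CompleteLattice α] {g : α → α} (hg : Monotone g) :
    g (lfp g) = lfp g := by
  have h1 : g (lfp g) ≤ lfp g := le_sInf fun x hx => le_trans (hg (sInf_le hx)) hx
  exact le_antisymm h1 (lfp_le' (hg h1))

theorem lfp_mono' {α : Type*} [CompleteLattice α] {g g' : α → α} (h : ∀ x, g x ≤ g' x) :
    lfp g ≤ lfp g' :=
  sInf_le_sInf fun x hx => le_trans (h x) hx

section Bekic

variable {L₁ L₂ L₃ : Type*} [CompleteLattice L₁] [CompleteLattice L₂] [CompleteLattice L₃]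
variable (f : L₁ × L₂ × L₃ → L₁ × L₂ × L₃)

def G3 (x : L₁) (y : L₂) : L₃ := lfp (fun z => (f (x, y, z)).2.2)
def K2 (x : L₁) (z : L₃) : L₂ := lfp (fun y => (f (x, y, z)).2.1)
def G2 (x : L₁) : L₂ := lfp (fun y => (f (x, y, G3 f x y)).2.1)
def H3 (x : L₁) : L₃ := lfp (fun z => (f (x, K2 f x z, z)).2.2)
def F1 (x : L₁) : L₁ := (f (x, G2 f x, H3 f x)).1

variable {f} (hf : Monotone f)
include hf

theorem hf1' {x x' : L₁} {y y' : L₂} {z z' : L₃} (hx : x ≤ x') (hy : y ≤ y') (hz : z ≤ z') :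
    (f (x, y, z)).1 ≤ (f (x', y', z')).1 :=
  (hf (Prod.mk_le_mk.mpr ⟨hx, Prod.mk_le_mk.mpr ⟨hy, hz⟩⟩)).1

theorem hf2' {x x' : L₁} {y y' : L₂} {z z' : L₃} (hx : x ≤ x') (hy : y ≤ y') (hz : z ≤ z') :
    (f (x, y, z)).2.1 ≤ (f (x', y', z')).2.1 :=
  (hf (Prod.mk_le_mk.mpr ⟨hx, Prod.mk_le_mk.mpr ⟨hy, hz⟩⟩)).2.1

theorem hf3' {x x' : L₁} {y y' : L₂} {z z' : L₃} (hx : x ≤ x') (hy : y ≤ y') (hz : z ≤ z') :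
    (f (x, y, z)).2.2 ≤ (f (x', y', z')).2.2 :=
  (hf (Prod.mk_le_mk.mpr ⟨hx, Prod.mk_le_mk.mpr ⟨hy, hz⟩⟩)).2.2

theorem G3_mono {x x' : L₁} {y y' : L₂} (hx : x ≤ x') (hy : y ≤ y') :
    G3 f x y ≤ G3 f x' y' :=
  lfp_mono' fun z => hf3' hf hx hy le_rfl

theorem K2_mono {x x' : L₁} {z z' : L₃} (hx : x ≤ x') (hz : z ≤ z') :
    K2 f x z ≤ K2 f x' z' :=
  lfp_mono' fun y => hf2' hf hx le_rfl hz

theorem G2_mono {x x' : L₁} (hx : x ≤ x') : G2 f x ≤ G2 f x' :=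
  lfp_mono' fun y => hf2' hf hx le_rfl (G3_mono hf hx le_rfl)

theorem H3_mono {x x' : L₁} (hx : x ≤ x') : H3 f x ≤ H3 f x' :=
  lfp_mono' fun z => hf3' hf hx (K2_mono hf hx le_rfl) le_rfl

theorem G3_fixed (x : L₁) (y : L₂) : (f (x, y, G3 f x y)).2.2 = G3 f x y :=
  lfp_fixed fun _ _ hz => hf3' hf le_rfl le_rfl hz

theorem K2_fixed (x : L₁) (z : L₃) : (f (x, K2 f x z, z)).2.1 = K2 f x z :=
  lfp_fixed fun _ _ hy => hf2' hf le_rfl hy le_rfl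

theorem G2_fixed (x : L₁) : (f (x, G2 f x, G3 f x (G2 f x))).2.1 = G2 f x :=
  lfp_fixed fun _ _ hy => hf2' hf le_rfl hy (G3_mono hf le_rfl hy)

theorem H3_fixed (x : L₁) : (f (x, K2 f x (H3 f x), H3 f x)).2.2 = H3 f x :=
  lfp_fixed fun _ _ hz => hf3' hf le_rfl (K2_mono hf le_rfl hz) hz

theorem H3_eq (x : L₁) : H3 f x = G3 f x (G2 f x) := by
  set a₂ := G2 f x with ha₂
  set a₃ := G3 f x a₂ with ha₃
  apply le_antisymm
  · -- H3 f x ≤ a₃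
    apply lfp_le'
    have hk : K2 f x a₃ ≤ a₂ := lfp_le' (le_of_eq (G2_fixed hf x))
    calc (f (x, K2 f x a₃, a₃)).2.2 ≤ (f (x, a₂, a₃)).2.2 :=
          hf3' hf le_rfl hk le_rfl
      _ = a₃ := G3_fixed hf x a₂
  · -- a₃ ≤ H3 f x
    set h := H3 f x with hh
    set b₂ := K2 f x h with hb₂
    have hb : (f (x, b₂, h)).2.2 = h := H3_fixed hf x
    have hg : G3 f x b₂ ≤ h := lfp_le' (le_of_eq hb)
    have ha2b : a₂ ≤ b₂ := by
      apply lfp_le'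
      calc (f (x, b₂, G3 f x b₂)).2.1 ≤ (f (x, b₂, h)).2.1 :=
            hf2' hf le_rfl le_rfl hg
        _ = b₂ := K2_fixed hf x h
    apply lfp_le'
    calc (f (x, a₂, h)).2.2 ≤ (f (x, b₂, h)).2.2 := hf3' hf le_rfl ha2b le_rfl
      _ = h := hb

theorem F1_fixed : F1 f (lfp (F1 f)) = lfp (F1 f) :=
  lfp_fixed fun _ _ hx => hf1' hf hx (G2_mono hf hx) (H3_mono hf hx)

end Bekic

theorem bekic_triple_fixed {L₁ L₂ L₃ : Type*} [CompleteLattice L₁] [CompleteLattice L₂]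
    [CompleteLattice L₃]
    (f : L₁ × L₂ × L₃ → L₁ × L₂ × L₃) (hf : Monotone f)
    (a₁ : L₁) (a₂ : L₂) (a₃ : L₃)
    (h₁ : a₁ = lfp (fun x => (f (x,
        lfp (fun y => (f (x, y, lfp (fun z => (f (x, y, z)).2.2))).2.1),
        lfp (fun z => (f (x, lfp (fun y => (f (x, y, z)).2.1), z)).2.2))).1))
    (h₂ : a₂ = lfp (fun y => (f (a₁, y, lfp (fun z => (f (a₁, y, z)).2.2))).2.1))
    (h₃ : a₃ = lfp (fun z => (f (a₁, a₂, z)).2.2)) :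
    f (a₁, a₂, a₃) = (a₁, a₂, a₃) := by
  have h₁' : a₁ = lfp (F1 f) := h₁
  have h₂' : a₂ = G2 f a₁ := h₂
  have h₃' : a₃ = G3 f a₁ a₂ := h₃
  have hH : H3 f a₁ = a₃ := by rw [H3_eq hf, ← h₂', ← h₃']
  have e1 : (f (a₁, a₂, a₃)).1 = a₁ := by
    have := F1_fixed hf (f := f)
    rw [← h₁'] at this
    have : (f (a₁, G2 f a₁, H3 f a₁)).1 = a₁ := this
    rwa [← h₂', hH] at this
  have e2 : (f (a₁, a₂, a₃)).2.1 = a₂ := by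
    have := G2_fixed hf a₁
    rwa [← h₂', ← h₃'] at this
  have e3 : (f (a₁, a₂, a₃)).2.2 = a₃ := by
    have := G3_fixed hf a₁ a₂
    rwa [← h₃'] at this
  exact Prod.ext e1 (Prod.ext e2 e3)
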